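/- Let k be a field of characteristic zero, let Ω be a k-vector space of dimension 2, let ⋆ ∈ Ω, and let Λ be a subspace of (Ω⊗Ω) ⊕ (Ω⊗Ω). The following are equivalent: (1) there exists a unit action (α, β) for ⋆ with α ≠ β that is coherent with Λ; (2) there exists a unit action (α, β) for ⋆ with α ≠ β that is compatible with Λ; (3) there exists a basis (≺, ≻) of Ω with ⋆ = ≺ + ≻ such that Λ is contained in the span of (⋆⊗≻, ≻⊗≻), (≺⊗≺, ≺⊗⋆), and (≻⊗≺, ≻⊗≺) in (Ω⊗Ω) ⊕ (Ω⊗Ω). -/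

import Mathlib

open TensorProduct

section Defs

variable {k : Type*} [Field k]

noncomputable def contrL {Ω : Type*} [AddCommGroup Ω] [Module k Ω]
    (φ : Module.Dual k Ω) : Ω ⊗[k] Ω →ₗ[k] Ω :=
  (TensorProduct.lid k Ω).toLinearMap ∘ₗ TensorProduct.map φ LinearMap.id

noncomputable def contrR {Ω : Type*} [AddCommGroup Ω] [Module k Ω]
    (φ : Module.Dual k Ω) : Ω ⊗[k] Ω →ₗ[k] Ω :=
  (TensorProduct.rid k Ω).toLinearMap ∘ₗ TensorProduct.map LinearMap.id φ

noncomputable def contrB {Ω₁ Ω₂ : Type*} [AddCommGroup Ω₁] [Module k Ω₁]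
    [AddCommGroup Ω₂] [Module k Ω₂]
    (φ : Module.Dual k Ω₁) (ψ : Module.Dual k Ω₂) : Ω₁ ⊗[k] Ω₂ →ₗ[k] k :=
  (TensorProduct.lid k k).toLinearMap ∘ₗ TensorProduct.map φ ψ

/-- The coherence equations (C1)-(C5) for a pair `uv ∈ (Ω⊗Ω) × (Ω⊗Ω)`. -/
def CoherenceEqs {Ω : Type*} [AddCommGroup Ω] [Module k Ω]
    (α β : Module.Dual k Ω) (star : Ω)
    (uv : (Ω ⊗[k] Ω) × (Ω ⊗[k] Ω)) : Prop :=
  contrL β uv.1 = contrL β uv.2 ∧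
  contrL α uv.1 = contrR β uv.2 ∧
  contrR α uv.1 = contrR α uv.2 ∧
  contrR β uv.1 = contrB β β uv.2 • star ∧
  contrB α α uv.1 • star = contrL α uv.2

/-- The compatibility equations (C1)-(C3). -/
def CompatEqs {Ω : Type*} [AddCommGroup Ω] [Module k Ω]
    (α β : Module.Dual k Ω)
    (uv : (Ω ⊗[k] Ω) × (Ω ⊗[k] Ω)) : Prop :=
  contrL β uv.1 = contrL β uv.2 ∧
  contrL α uv.1 = contrR β uv.2 ∧
  contrR α uv.1 = contrR α uv.2

def IsCoherent {Ω : Type*} [AddCommGroup Ω] [Module k Ω]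
    (α β : Module.Dual k Ω) (star : Ω)
    (Λ : Submodule k ((Ω ⊗[k] Ω) × (Ω ⊗[k] Ω))) : Prop :=
  ∀ uv ∈ Λ, CoherenceEqs α β star uv

def IsCompatible {Ω : Type*} [AddCommGroup Ω] [Module k Ω]
    (α β : Module.Dual k Ω)
    (Λ : Submodule k ((Ω ⊗[k] Ω) × (Ω ⊗[k] Ω))) : Prop :=
  ∀ uv ∈ Λ, CompatEqs α β uv

end Defs

section Aux

variable {k : Type*} [Field k] {Ω : Type*} [AddCommGroup Ω] [Module k Ω]

lemma contrL_tmul (φ : Module.Dual k Ω) (x y : Ω) :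
    contrL φ (x ⊗ₜ[k] y) = φ x • y := by
  simp [contrL]

lemma contrR_tmul (φ : Module.Dual k Ω) (x y : Ω) :
    contrR φ (x ⊗ₜ[k] y) = φ y • x := by
  simp [contrR]

lemma contrB_tmul (φ ψ : Module.Dual k Ω) (x y : Ω) :
    contrB φ ψ (x ⊗ₜ[k] y) = φ x * ψ y := by
  simp [contrB, smul_eq_mul]

/-- Coherence holds on the span of the three dendriform generators. -/
lemma coherent_span (α β : Module.Dual k Ω) (e f : Ω)
    (hαe : α e = 1) (hαf : α f = 0) (hβe : β e = 0) (hβf : β f = 1) :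
    IsCoherent α β (e + f)
      (Submodule.span k
        ({((e + f) ⊗ₜ[k] f, f ⊗ₜ[k] f),
          (e ⊗ₜ[k] e, e ⊗ₜ[k] (e + f)),
          (f ⊗ₜ[k] e, f ⊗ₜ[k] e)} : Set ((Ω ⊗[k] Ω) × (Ω ⊗[k] Ω)))) := by
  intro uv h
  induction h using Submodule.span_induction with
  | mem x hx =>
    simp only [Set.mem_insert_iff, Set.mem_singleton_iff] at hx
    rcases hx with rfl | rfl | rfl <;>
      refine ⟨?_, ?_, ?_, ?_, ?_⟩ <;>
      simp [CoherenceEqs, contrL_tmul, contrR_tmul, contrB_tmul, add_tmul, tmul_add,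
        map_add, hαe, hαf, hβe, hβf, add_smul, smul_add]
  | zero => refine ⟨?_, ?_, ?_, ?_, ?_⟩ <;> simp
  | add x y hx hy ihx ihy =>
    obtain ⟨a1, a2, a3, a4, a5⟩ := ihx
    obtain ⟨b1, b2, b3, b4, b5⟩ := ihy
    refine ⟨?_, ?_, ?_, ?_, ?_⟩ <;>
      (simp only [Prod.fst_add, Prod.snd_add, map_add, a1, a2, a3, a4, ← a5,
        b1, b2, b3, b4, ← b5] <;> module)
  | smul c x hx ih =>
    obtain ⟨a1, a2, a3, a4, a5⟩ := ih
    refine ⟨?_, ?_, ?_, ?_, ?_⟩ <;>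
      (simp only [Prod.smul_fst, Prod.smul_snd, map_smul, smul_eq_mul, a1, a2, a3, a4, ← a5] <;> module)

end Aux

section Aux2

variable {k : Type*} [Field k] {Ω : Type*} [AddCommGroup Ω] [Module k Ω]

lemma compat_mem (α β : Module.Dual k Ω) (e f : Ω)
    (hαe : α e = 1) (hαf : α f = 0) (hβe : β e = 0) (hβf : β f = 1)
    (hM : ∀ x : Ω, α x • e + β x • f = x)
    (uv : (Ω ⊗[k] Ω) × (Ω ⊗[k] Ω)) (h : CompatEqs α β uv) :
    uv ∈ Submodule.span k
      ({((e + f) ⊗ₜ[k] f, f ⊗ₜ[k] f),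
        (e ⊗ₜ[k] e, e ⊗ₜ[k] (e + f)),
        (f ⊗ₜ[k] e, f ⊗ₜ[k] e)} : Set ((Ω ⊗[k] Ω) × (Ω ⊗[k] Ω))) := by
  have hL : ∀ (φ : Module.Dual k Ω) (w : Ω ⊗[k] Ω),
      contrL φ w = contrB φ α w • e + contrB φ β w • f := by
    intro φ w
    have key : (contrL φ : Ω ⊗[k] Ω →ₗ[k] Ω) =
        (contrB φ α).smulRight e + (contrB φ β).smulRight f := by
      apply TensorProduct.ext'
      intro x y
      simp only [contrL_tmul, contrB_tmul, LinearMap.add_apply, LinearMap.smulRight_apply]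
      conv_lhs => rw [← hM y]
      module
    rw [key]; simp
  have hR : ∀ (φ : Module.Dual k Ω) (w : Ω ⊗[k] Ω),
      contrR φ w = contrB α φ w • e + contrB β φ w • f := by
    intro φ w
    have key : (contrR φ : Ω ⊗[k] Ω →ₗ[k] Ω) =
        (contrB α φ).smulRight e + (contrB β φ).smulRight f := by
      apply TensorProduct.ext'
      intro x y
      simp only [contrR_tmul, contrB_tmul, LinearMap.add_apply, LinearMap.smulRight_apply]
      conv_lhs => rw [← hM x]
      module
    rw [key]; simp
  have hT : ∀ w : Ω ⊗[k] Ω,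
      w = contrB α α w • (e ⊗ₜ[k] e) + contrB α β w • (e ⊗ₜ[k] f) +
          contrB β α w • (f ⊗ₜ[k] e) + contrB β β w • (f ⊗ₜ[k] f) := by
    intro w
    have key : (LinearMap.id : Ω ⊗[k] Ω →ₗ[k] Ω ⊗[k] Ω) =
        (contrB α α).smulRight (e ⊗ₜ[k] e) + (contrB α β).smulRight (e ⊗ₜ[k] f) +
        (contrB β α).smulRight (f ⊗ₜ[k] e) + (contrB β β).smulRight (f ⊗ₜ[k] f) := by
      apply TensorProduct.ext'
      intro x y
      simp only [contrB_tmul, LinearMap.add_apply, LinearMap.smulRight_apply,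
        LinearMap.id_apply]
      conv_lhs => rw [← hM x, ← hM y]
      simp only [add_tmul, tmul_add, tmul_smul, ← smul_tmul']
      module
    conv_lhs => rw [← LinearMap.id_apply (R := k) w, key]
    simp
  have hsc : ∀ p q p' q' : k, p • e + q • f = p' • e + q' • f → p = p' ∧ q = q' := by
    intro p q p' q' hpq
    constructor
    · have := congrArg α hpq
      simpa [map_add, map_smul, hαe, hαf, smul_eq_mul] using this
    · have := congrArg β hpq
      simpa [map_add, map_smul, hβe, hβf, smul_eq_mul] using this
  obtain ⟨h1, h2, h3⟩ := h
  rw [hL, hL] at h1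
  rw [hL, hR] at h2
  rw [hR, hR] at h3
  obtain ⟨hc, hd⟩ := hsc _ _ _ _ h1
  obtain ⟨hab', hbd'⟩ := hsc _ _ _ _ h2
  obtain ⟨haa', hcc'⟩ := hsc _ _ _ _ h3
  have hdb : contrB β β uv.1 = contrB α β uv.1 := by rw [hd, ← hbd']
  have huv : uv = contrB α β uv.1 • (((e + f) ⊗ₜ[k] f : Ω ⊗[k] Ω), (f ⊗ₜ[k] f : Ω ⊗[k] Ω)) +
      contrB α α uv.1 • ((e ⊗ₜ[k] e : Ω ⊗[k] Ω), (e ⊗ₜ[k] (e + f) : Ω ⊗[k] Ω)) +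
      contrB β α uv.1 • ((f ⊗ₜ[k] e : Ω ⊗[k] Ω), (f ⊗ₜ[k] e : Ω ⊗[k] Ω)) := by
    apply Prod.ext
    · simp only [Prod.fst_add, Prod.smul_fst]
      conv_lhs => rw [hT uv.1, hdb]
      simp only [add_tmul]
      module
    · simp only [Prod.snd_add, Prod.smul_snd]
      conv_lhs => rw [hT uv.2, ← haa', ← hab', ← hcc', ← hd, hdb]
      simp only [tmul_add]
      module
  rw [huv]
  refine add_mem (add_mem (Submodule.smul_mem _ _ (Submodule.subset_span ?_))
    (Submodule.smul_mem _ _ (Submodule.subset_span ?_)))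
    (Submodule.smul_mem _ _ (Submodule.subset_span ?_)) <;> simp

end Aux2

section Main

variable {k : Type*} [Field k] {Ω : Type*} [AddCommGroup Ω] [Module k Ω]

lemma exists_basis_of_compat [FiniteDimensional k Ω]
    (hdim : Module.finrank k Ω = 2)
    (star : Ω) (Λ : Submodule k ((Ω ⊗[k] Ω) × (Ω ⊗[k] Ω)))
    (α β : Module.Dual k Ω) (hα : α star = 1) (hβ : β star = 1)
    (hne : α ≠ β) (hcompat : IsCompatible α β Λ) :
    ∃ b : Module.Basis (Fin 2) k Ω, star = b 0 + b 1 ∧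
      Λ ≤ Submodule.span k
        ({(star ⊗ₜ[k] b 1, b 1 ⊗ₜ[k] b 1),
          (b 0 ⊗ₜ[k] b 0, b 0 ⊗ₜ[k] star),
          (b 1 ⊗ₜ[k] b 0, b 1 ⊗ₜ[k] b 0)} :
          Set ((Ω ⊗[k] Ω) × (Ω ⊗[k] Ω))) := by
  obtain ⟨v, hv⟩ := DFunLike.ne_iff.mp hne
  have hc : α v - β v ≠ 0 := sub_ne_zero_of_ne hv
  set w := (α v - β v)⁻¹ • v with hw
  have hαβw : α w - β w = 1 := by
    have h1 : (α v - β v)⁻¹ * (α v - β v) = 1 := inv_mul_cancel₀ hc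
    simp only [hw, map_smul, smul_eq_mul]
    linear_combination h1
  set e := (1 - α w) • star + w with he
  set f := star - e with hf1
  have hαe : α e = 1 := by
    simp only [he, map_add, map_smul, smul_eq_mul, hα]
    ring
  have hβe : β e = 0 := by
    simp only [he, map_add, map_smul, smul_eq_mul, hβ]
    linear_combination -hαβw
  have hαf : α f = 0 := by simp [hf1, map_sub, hα, hαe]
  have hβf : β f = 1 := by simp [hf1, map_sub, hβ, hβe]
  have hstar : star = e + f := by rw [hf1]; abel
  have hli : LinearIndependent k ![e, f] := by
    rw [LinearIndependent.pair_iff]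
    intro s t hst
    constructor
    · have := congrArg α hst
      simpa [map_add, map_smul, smul_eq_mul, hαe, hαf] using this
    · have := congrArg β hst
      simpa [map_add, map_smul, smul_eq_mul, hβe, hβf] using this
  have hcard : Fintype.card (Fin 2) = Module.finrank k Ω := by simp [hdim]
  set b := basisOfLinearIndependentOfCardEqFinrank hli hcard with hbdef
  have hbco : ⇑b = ![e, f] := coe_basisOfLinearIndependentOfCardEqFinrank hli hcard
  have hb0 : b 0 = e := by rw [hbco]; rfl
  have hb1 : b 1 = f := by rw [hbco]; rfl
  have hM : ∀ x : Ω, α x • e + β x • f = x := by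
    have hmap : (α.smulRight e + β.smulRight f : Ω →ₗ[k] Ω) = LinearMap.id := by
      apply b.ext
      intro i
      fin_cases i <;>
        simp [hb0, hb1, hαe, hαf, hβe, hβf]
    intro x
    have := DFunLike.congr_fun hmap x
    simpa using this
  refine ⟨b, by rw [hstar, hb0, hb1], ?_⟩
  intro uv huv
  rw [hstar, hb0, hb1]
  exact compat_mem α β e f hαe hαf hβe hβf hM uv (hcompat uv huv)

lemma coherent_of_basis (star : Ω) (Λ : Submodule k ((Ω ⊗[k] Ω) × (Ω ⊗[k] Ω)))
    (b : Module.Basis (Fin 2) k Ω) (hstar : star = b 0 + b 1)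
    (hle : Λ ≤ Submodule.span k
        ({(star ⊗ₜ[k] b 1, b 1 ⊗ₜ[k] b 1),
          (b 0 ⊗ₜ[k] b 0, b 0 ⊗ₜ[k] star),
          (b 1 ⊗ₜ[k] b 0, b 1 ⊗ₜ[k] b 0)} :
          Set ((Ω ⊗[k] Ω) × (Ω ⊗[k] Ω)))) :
    ∃ α β : Module.Dual k Ω,
      α star = 1 ∧ β star = 1 ∧ α ≠ β ∧ IsCoherent α β star Λ := by
  refine ⟨b.coord 0, b.coord 1, ?_, ?_, ?_, ?_⟩
  · rw [hstar]; simp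
  · rw [hstar]; simp
  · intro hco
    have h1 := DFunLike.congr_fun hco (b 0)
    simp at h1
  · intro uv huv
    rw [hstar]
    have hc := coherent_span (b.coord 0) (b.coord 1) (b 0) (b 1)
      (by simp) (by simp) (by simp) (by simp)
    apply hc
    rw [hstar] at hle
    exact hle huv

end Main

/-- Corollary: dimension-2 case with α ≠ β; coherent ↔ compatible ↔ dendriform relations. -/
theorem dim_two_neq_classification
    {k : Type*} [Field k] [CharZero k]
    {Ω : Type*} [AddCommGroup Ω] [Module k Ω] [FiniteDimensional k Ω]
    (hdim : Module.finrank k Ω = 2)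
    (star : Ω) (Λ : Submodule k ((Ω ⊗[k] Ω) × (Ω ⊗[k] Ω))) :
    ((∃ α β : Module.Dual k Ω,
        α star = 1 ∧ β star = 1 ∧ α ≠ β ∧ IsCoherent α β star Λ) ↔
      (∃ b : Module.Basis (Fin 2) k Ω, star = b 0 + b 1 ∧
        Λ ≤ Submodule.span k
          ({(star ⊗ₜ[k] b 1, b 1 ⊗ₜ[k] b 1),
            (b 0 ⊗ₜ[k] b 0, b 0 ⊗ₜ[k] star),
            (b 1 ⊗ₜ[k] b 0, b 1 ⊗ₜ[k] b 0)} :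
            Set ((Ω ⊗[k] Ω) × (Ω ⊗[k] Ω))))) ∧
    ((∃ α β : Module.Dual k Ω,
        α star = 1 ∧ β star = 1 ∧ α ≠ β ∧ IsCompatible α β Λ) ↔
      (∃ b : Module.Basis (Fin 2) k Ω, star = b 0 + b 1 ∧
        Λ ≤ Submodule.span k
          ({(star ⊗ₜ[k] b 1, b 1 ⊗ₜ[k] b 1),
            (b 0 ⊗ₜ[k] b 0, b 0 ⊗ₜ[k] star),
            (b 1 ⊗ₜ[k] b 0, b 1 ⊗ₜ[k] b 0)} :
            Set ((Ω ⊗[k] Ω) × (Ω ⊗[k] Ω))))) := by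
  constructor
  · constructor
    · rintro ⟨α, β, h1, h2, hne, hcoh⟩
      exact exists_basis_of_compat hdim star Λ α β h1 h2 hne
        (fun uv h => ⟨(hcoh uv h).1, (hcoh uv h).2.1, (hcoh uv h).2.2.1⟩)
    · rintro ⟨b, hstar, hle⟩
      exact coherent_of_basis star Λ b hstar hle
  · constructor
    · rintro ⟨α, β, h1, h2, hne, hcomp⟩
      exact exists_basis_of_compat hdim star Λ α β h1 h2 hne hcomp
    · rintro ⟨b, hstar, hle⟩
      obtain ⟨α, β, h1, h2, hne, hcoh⟩ := coherent_of_basis star Λ b hstar hle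
      exact ⟨α, β, h1, h2, hne,
        fun uv h => ⟨(hcoh uv h).1, (hcoh uv h).2.1, (hcoh uv h).2.2.1⟩⟩
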